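/- Let H and H' be real Hilbert spaces, K : H → H' a bounded linear operator with operator norm strictly less than 1, g ∈ H', p ≥ 1, (φ_γ)_{γ∈Γ} an orthonormal basis of H, and w = (w_γ)_{γ∈Γ} a sequence of strictly positive weights. Let f⁰ ∈ H and define fⁿ = S_{w,p}(fⁿ⁻¹ + K*(g − K fⁿ⁻¹)) for n ≥ 1. Then the series Σ_{n=0}^{∞} ‖fⁿ⁺¹ − fⁿ‖² converges; in particular ‖fⁿ⁺¹ − fⁿ‖ → 0 as n → ∞ (asymptotic regularity of the iteration). -/

import Mathlib

open scoped ENNReal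
open Filter

noncomputable def scalarF (w p : ℝ) (x : ℝ) : ℝ :=
  x + w * p / 2 * (Real.sign x * |x| ^ (p - 1))

noncomputable def scalarS (w p : ℝ) : ℝ → ℝ :=
  if p = 1 then
    fun x => if w / 2 ≤ x then x - w / 2 else if x ≤ -(w / 2) then x + w / 2 else 0
  else Function.invFun (scalarF w p)

noncomputable def shrinkOp {H : Type*} [NormedAddCommGroup H] [InnerProductSpace ℝ H]
    {Γ : Type*} (b : HilbertBasis Γ ℝ H) (w : Γ → ℝ) (p : ℝ) (h : H) : H :=
  ∑' γ, scalarS (w γ) p (b.repr h γ) • b γ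

noncomputable def Phi {H H' : Type*} [NormedAddCommGroup H] [InnerProductSpace ℝ H]
    [NormedAddCommGroup H'] [InnerProductSpace ℝ H']
    {Γ : Type*} (K : H →L[ℝ] H') (g : H') (b : HilbertBasis Γ ℝ H)
    (w : Γ → ℝ) (p : ℝ) (f : H) : ℝ≥0∞ :=
  ENNReal.ofReal (‖K f - g‖ ^ 2) + ∑' γ, ENNReal.ofReal (w γ * |b.repr f γ| ^ p)

/-! ### Auxiliary scalar lemmas -/

open scoped RealInnerProductSpace

lemma scalarF_def (w p x : ℝ) :
    scalarF w p x = x + w * p / 2 * (Real.sign x * |x| ^ (p - 1)) := rfl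

lemma scalarS_one (w : ℝ) : scalarS w 1 =
    fun x => if w / 2 ≤ x then x - w / 2 else if x ≤ -(w / 2) then x + w / 2 else 0 := by
  rw [scalarS, if_pos rfl]

lemma sign_abs_cont (p : ℝ) (hp : 1 < p) :
    Continuous fun x : ℝ => Real.sign x * |x| ^ (p - 1) := by
  have habs : ∀ a : ℝ, ContinuousAt (fun x : ℝ => |x| ^ (p - 1)) a := fun a =>
    (Real.continuousAt_rpow_const |a| (p - 1) (Or.inr (by linarith))).comp
      continuous_abs.continuousAt
  rw [continuous_iff_continuousAt]
  intro a
  rcases lt_trichotomy a 0 with ha | ha | ha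
  · refine ContinuousAt.congr ((habs a).neg) ?_
    filter_upwards [Iio_mem_nhds ha] with x hx
    rw [Real.sign_of_neg hx]; simp only [Pi.neg_apply]; ring
  · subst ha
    have h0 : Real.sign (0:ℝ) * |(0:ℝ)| ^ (p - 1) = 0 := by simp
    rw [ContinuousAt, h0]
    apply squeeze_zero_norm (a := fun x : ℝ => |x| ^ (p - 1))
    · intro x
      have h1 : |Real.sign x| ≤ 1 := by
        rcases lt_trichotomy x 0 with h | h | h <;>
          simp [Real.sign_of_neg, Real.sign_of_pos, h]
      have h2 : (0:ℝ) ≤ |x| ^ (p - 1) := Real.rpow_nonneg (abs_nonneg x) _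
      calc ‖Real.sign x * |x| ^ (p - 1)‖ = |Real.sign x| * |x| ^ (p - 1) := by
            rw [Real.norm_eq_abs, abs_mul, abs_of_nonneg h2]
        _ ≤ 1 * |x| ^ (p - 1) := by nlinarith
        _ = |x| ^ (p - 1) := one_mul _
    · have := (habs 0).tendsto
      simpa [Real.zero_rpow (by linarith : p - 1 ≠ 0)] using this
  · refine ContinuousAt.congr (habs a) ?_
    filter_upwards [Ioi_mem_nhds ha] with x hx
    rw [Real.sign_of_pos hx, one_mul]

lemma scalarF_surjective (w p : ℝ) (hw : 0 < w) (hp : 1 < p) :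
    Function.Surjective (scalarF w p) := by
  have hc : Continuous (scalarF w p) := by
    unfold scalarF
    exact continuous_id.add (continuous_const.mul (sign_abs_cont p hp))
  intro y
  have hub : ∀ t : ℝ, 0 ≤ t → t ≤ scalarF w p t := by
    intro t ht
    have : 0 ≤ Real.sign t := by
      rcases eq_or_lt_of_le ht with h | h
      · simp [← h]
      · simp [Real.sign_of_pos h]
    have h2 : (0:ℝ) ≤ |t| ^ (p - 1) := Real.rpow_nonneg (abs_nonneg t) _
    have : 0 ≤ w * p / 2 * (Real.sign t * |t| ^ (p - 1)) := by positivity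
    simp only [scalarF]; linarith
  have hlb : ∀ t : ℝ, t ≤ 0 → scalarF w p t ≤ t := by
    intro t ht
    have hs : Real.sign t ≤ 0 := by
      rcases eq_or_lt_of_le ht with h | h
      · simp [h]
      · simp [Real.sign_of_neg h]
    have h2 : (0:ℝ) ≤ |t| ^ (p - 1) := Real.rpow_nonneg (abs_nonneg t) _
    have hwp : (0:ℝ) ≤ w * p / 2 := by positivity
    have : w * p / 2 * (Real.sign t * |t| ^ (p - 1)) ≤ 0 :=
      mul_nonpos_of_nonneg_of_nonpos hwp (mul_nonpos_of_nonpos_of_nonneg hs h2)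
    simp only [scalarF]; linarith
  have h1 : scalarF w p (-|y|) ≤ y := (hlb _ (neg_nonpos_of_nonneg (abs_nonneg y))).trans
    (neg_abs_le y)
  have h2 : y ≤ scalarF w p |y| := (le_abs_self y).trans (hub _ (abs_nonneg y))
  have := intermediate_value_Icc (neg_le_self (abs_nonneg y))
    hc.continuousOn (Set.mem_Icc.mpr ⟨h1, h2⟩)
  obtain ⟨t, _, ht⟩ := this
  exact ⟨t, ht⟩

lemma scalarS_spec (w p : ℝ) (hw : 0 < w) (hp : 1 < p) (x : ℝ) :
    scalarF w p (scalarS w p x) = x := by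
  rw [scalarS, if_neg hp.ne']
  exact Function.invFun_eq (scalarF_surjective w p hw hp x)

lemma rpow_grad_ineq {p a t : ℝ} (hp : 1 < p) (ha : 0 < a) (ht : 0 ≤ t) :
    a ^ p + p * a ^ (p - 1) * (t - a) ≤ t ^ p := by
  have hs : -1 ≤ t / a - 1 := by
    have : 0 ≤ t / a := div_nonneg ht ha.le
    linarith
  have hb := one_add_mul_self_le_rpow_one_add hs hp.le
  have h1 : (1 + (t / a - 1)) = t / a := by ring
  rw [h1, Real.div_rpow ht ha.le] at hb
  have hap : (0:ℝ) < a ^ p := Real.rpow_pos_of_pos ha p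
  have hmul := mul_le_mul_of_nonneg_left hb hap.le
  have key : a ^ p * (t ^ p / a ^ p) = t ^ p := by field_simp
  rw [key] at hmul
  have hpow : a ^ (p - 1) = a ^ p / a := by
    rw [Real.rpow_sub ha, Real.rpow_one]
  have key2 : a ^ p * (1 + p * (t / a - 1)) = a ^ p + p * a ^ (p - 1) * (t - a) := by
    rw [hpow]; field_simp
  calc a ^ p + p * a ^ (p - 1) * (t - a) = a ^ p * (1 + p * (t / a - 1)) := key2.symm
    _ ≤ t ^ p := hmul

/-- The scalar shrinkage `scalarS w p x` minimizes `t ↦ (t - x)^2 + w * |t|^p`. -/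
lemma scalarS_min (w p : ℝ) (hw : 0 < w) (hp : 1 ≤ p) (x t : ℝ) :
    (scalarS w p x - x) ^ 2 + w * |scalarS w p x| ^ p ≤ (t - x) ^ 2 + w * |t| ^ p := by
  rcases eq_or_lt_of_le hp with h1 | h1
  · -- p = 1
    subst h1
    simp only [scalarS_one, Real.rpow_one]
    split_ifs with hx1 hx2
    · rw [abs_of_nonneg (by linarith : (0:ℝ) ≤ x - w / 2)]
      rcases abs_cases t with ⟨hat, ht⟩ | ⟨hat, ht⟩ <;> rw [hat] <;>
        nlinarith [sq_nonneg (t - x + w / 2), sq_nonneg (t - x - w / 2)]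
    · push_neg at hx1
      rw [abs_of_nonpos (by linarith : x + w / 2 ≤ 0)]
      rcases abs_cases t with ⟨hat, ht⟩ | ⟨hat, ht⟩ <;> rw [hat] <;>
        nlinarith [sq_nonneg (t - x + w / 2), sq_nonneg (t - x - w / 2)]
    · push_neg at hx1 hx2
      rw [abs_zero]
      rcases abs_cases t with ⟨hat, ht⟩ | ⟨hat, ht⟩ <;> rw [hat]
      · nlinarith [mul_nonneg ht (by linarith : (0:ℝ) ≤ t - 2 * x + w)]
      · nlinarith [mul_nonneg (by linarith : (0:ℝ) ≤ -t) (by linarith : (0:ℝ) ≤ -t + 2 * x + w)]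
  · -- 1 < p
    have hF := scalarS_spec w p hw h1 x
    rw [scalarF_def] at hF
    set s := scalarS w p x with hs
    rcases eq_or_ne s 0 with h0 | h0
    · rw [h0] at hF ⊢
      simp at hF
      rw [← hF]
      have h3 : (0:ℝ) ≤ |t| ^ p := Real.rpow_nonneg (abs_nonneg t) _
      have h2 : |(0:ℝ)| ^ p = 0 := by
        rw [abs_zero, Real.zero_rpow (by linarith : p ≠ 0)]
      rw [h2]
      nlinarith
    · have hsa : 0 < |s| := abs_pos.mpr h0
      have k3 := rpow_grad_ineq h1 hsa (abs_nonneg t)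
      have k1 : Real.sign s * s = |s| := by
        rcases lt_or_gt_of_ne h0 with h | h
        · rw [Real.sign_of_neg h, abs_of_neg h]; ring
        · rw [Real.sign_of_pos h, abs_of_pos h]; ring
      have k2 : Real.sign s * t ≤ |t| := by
        rcases lt_or_gt_of_ne h0 with h | h
        · rw [Real.sign_of_neg h]; rcases abs_cases t with ⟨h', _⟩ | ⟨h', _⟩ <;> linarith
        · rw [Real.sign_of_pos h]; rcases abs_cases t with ⟨h', _⟩ | ⟨h', _⟩ <;> linarith
      have hA : (0:ℝ) ≤ |s| ^ (p - 1) := Real.rpow_nonneg (abs_nonneg s) _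
      have hwp : (0:ℝ) ≤ w * p := by nlinarith
      have e0 : (t - x) ^ 2 = (t - s) ^ 2 + 2 * (t - s) * (s - x) + (s - x) ^ 2 := by ring
      have e1 : 2 * (t - s) * (s - x) =
          -(w * p) * |s| ^ (p - 1) * (Real.sign s * t - Real.sign s * s) := by
        rw [show s - x = -(w * p / 2 * (Real.sign s * |s| ^ (p - 1))) by linarith]
        ring
      rw [k1] at e1
      have e2 : -(w * p) * |s| ^ (p - 1) * (|t| - |s|) ≤
          -(w * p) * |s| ^ (p - 1) * (Real.sign s * t - |s|) := by
        have hnn : 0 ≤ w * p * |s| ^ (p - 1) := mul_nonneg hwp hA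
        nlinarith
      have e3 := mul_le_mul_of_nonneg_left k3 hw.le
      nlinarith [sq_nonneg (t - s)]

lemma scalarS_abs_le (w p : ℝ) (hw : 0 < w) (hp : 1 ≤ p) (x : ℝ) :
    |scalarS w p x| ≤ |x| := by
  rcases eq_or_lt_of_le hp with h1 | h1
  · subst h1
    simp only [scalarS_one]
    split_ifs with hx1 hx2 <;> (try push_neg at *) <;>
      rcases abs_cases x with ⟨hax, hx⟩ | ⟨hax, hx⟩ <;> rw [hax, abs_le] <;>
      constructor <;> linarith
  · have hF := scalarS_spec w p hw h1 x
    rw [scalarF_def] at hF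
    set s := scalarS w p x with hs
    have hA : (0:ℝ) ≤ |s| ^ (p - 1) := Real.rpow_nonneg (abs_nonneg s) _
    have hwp : (0:ℝ) < w * p / 2 := by nlinarith
    rcases lt_trichotomy s 0 with h | h | h
    · rw [Real.sign_of_neg h] at hF
      have : x ≤ s := by nlinarith
      rw [abs_of_neg h, abs_of_neg (by linarith : x < 0)]
      linarith
    · simp [h]
    · rw [Real.sign_of_pos h] at hF
      have : s ≤ x := by nlinarith
      rw [abs_of_pos h, abs_of_pos (by linarith : 0 < x)]
      linarith

/-! ### Hilbert space lemmas -/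

section HilbertLemmas

variable {H H' : Type*} [NormedAddCommGroup H] [InnerProductSpace ℝ H] [CompleteSpace H]
  [NormedAddCommGroup H'] [InnerProductSpace ℝ H'] [CompleteSpace H']
  {Γ : Type*} (b : HilbertBasis Γ ℝ H)

omit [CompleteSpace H] in
lemma parseval (f : H) : HasSum (fun γ => (b.repr f γ) ^ 2) (‖f‖ ^ 2) := by
  have h := b.hasSum_inner_mul_inner f f
  have e1 : ∀ γ, ⟪f, b γ⟫ * ⟪b γ, f⟫ = (b.repr f γ) ^ 2 := by
    intro γ
    rw [b.repr_apply_apply, real_inner_comm f (b γ), pow_two]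
  have e2 : ⟪f, f⟫ = ‖f‖ ^ 2 := real_inner_self_eq_norm_sq f
  rw [e2] at h
  exact h.congr_fun fun γ => (e1 γ).symm

omit [CompleteSpace H] in
lemma shrink_repr (w : Γ → ℝ) (hw : ∀ γ, 0 < w γ) (p : ℝ) (hp : 1 ≤ p) (h : H) (γ : Γ) :
    b.repr (shrinkOp b w p h) γ = scalarS (w γ) p (b.repr h γ) := by
  set c : Γ → ℝ := fun γ => scalarS (w γ) p (b.repr h γ) with hc
  have hsq : Summable fun γ => (b.repr h γ) ^ 2 := (parseval b h).summable
  have hmem : Memℓp c 2 := by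
    apply memℓp_gen
    have he : (2 : ℝ≥0∞).toReal = (2 : ℝ) := by simp
    rw [he]
    apply Summable.of_nonneg_of_le (fun γ => by positivity) _ hsq
    intro γ
    have h1 : ‖c γ‖ ^ (2:ℝ) = |c γ| ^ (2:ℕ) := by
      rw [Real.norm_eq_abs, ← Real.rpow_natCast]; norm_num
    rw [h1]
    have h2 := scalarS_abs_le (w γ) p (hw γ) hp (b.repr h γ)
    calc |c γ| ^ 2 ≤ |b.repr h γ| ^ 2 := by
          apply pow_le_pow_left₀ (abs_nonneg _) h2
      _ = (b.repr h γ) ^ 2 := sq_abs _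
  have hsum := b.hasSum_repr_symm (⟨c, hmem⟩ : lp (fun _ : Γ => ℝ) 2)
  have : shrinkOp b w p h = b.repr.symm ⟨c, hmem⟩ := by
    rw [shrinkOp]
    exact hsum.tsum_eq
  rw [this]
  simp [hc]

lemma key_identity (K : H →L[ℝ] H') (g : H') (a u : H) :
    ‖u - (a + (ContinuousLinearMap.adjoint K) (g - K a))‖ ^ 2
      - ‖a - (a + (ContinuousLinearMap.adjoint K) (g - K a))‖ ^ 2
    = ‖K u - g‖ ^ 2 - ‖K a - g‖ ^ 2 + ‖u - a‖ ^ 2 - ‖K (u - a)‖ ^ 2 := by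
  set h := a + (ContinuousLinearMap.adjoint K) (g - K a) with hh
  have n1 : ‖u - h‖ ^ 2 = ‖u‖ ^ 2 - 2 * ⟪u, h⟫ + ‖h‖ ^ 2 := norm_sub_sq_real u h
  have n2 : ‖a - h‖ ^ 2 = ‖a‖ ^ 2 - 2 * ⟪a, h⟫ + ‖h‖ ^ 2 := norm_sub_sq_real a h
  have n3 : ‖K u - g‖ ^ 2 = ‖K u‖ ^ 2 - 2 * ⟪K u, g⟫ + ‖g‖ ^ 2 := norm_sub_sq_real _ _
  have n4 : ‖K a - g‖ ^ 2 = ‖K a‖ ^ 2 - 2 * ⟪K a, g⟫ + ‖g‖ ^ 2 := norm_sub_sq_real _ _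
  have n5 : ‖u - a‖ ^ 2 = ‖u‖ ^ 2 - 2 * ⟪u, a⟫ + ‖a‖ ^ 2 := norm_sub_sq_real u a
  have n6 : ‖K (u - a)‖ ^ 2 = ‖K u‖ ^ 2 - 2 * ⟪K u, K a⟫ + ‖K a‖ ^ 2 := by
    rw [map_sub]; exact norm_sub_sq_real _ _
  have i1 : ⟪u, h⟫ = ⟪u, a⟫ + ⟪K u, g⟫ - ⟪K u, K a⟫ := by
    rw [hh, inner_add_right, ContinuousLinearMap.adjoint_inner_right, inner_sub_right]
    ring
  have i2 : ⟪a, h⟫ = ‖a‖ ^ 2 + ⟪K a, g⟫ - ‖K a‖ ^ 2 := by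
    rw [hh, inner_add_right, ContinuousLinearMap.adjoint_inner_right, inner_sub_right,
      real_inner_self_eq_norm_sq, real_inner_self_eq_norm_sq]
    ring
  rw [n1, n2, n3, n4, n5, n6, i1, i2]
  ring

end HilbertLemmas

/-- The successive differences of the thresholded Landweber iterates are square-summable;
in particular the iteration is asymptotically regular. -/
theorem successive_differences_square_summable
    {H H' : Type*} [NormedAddCommGroup H] [InnerProductSpace ℝ H] [CompleteSpace H]
    [NormedAddCommGroup H'] [InnerProductSpace ℝ H'] [CompleteSpace H']
    {Γ : Type*} (b : HilbertBasis Γ ℝ H)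
    (K : H →L[ℝ] H') (hK : ‖K‖ < 1) (g : H')
    (p : ℝ) (hp : 1 ≤ p) (w : Γ → ℝ) (hw : ∀ γ, 0 < w γ)
    (f : ℕ → H)
    (hf : ∀ n, f (n + 1) =
        shrinkOp b w p (f n + (ContinuousLinearMap.adjoint K) (g - K (f n)))) :
    (Summable fun n => ‖f (n + 1) - f n‖ ^ 2) ∧
    Tendsto (fun n => ‖f (n + 1) - f n‖) atTop (nhds 0) := by
  set hpt : ℕ → H := fun n => f n + (ContinuousLinearMap.adjoint K) (g - K (f n)) with hhpt
  have hrepr : ∀ n γ, b.repr (f (n + 1)) γ = scalarS (w γ) p (b.repr (hpt n) γ) := by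
    intro n γ
    rw [hf n]
    exact shrink_repr b w hw p hp (hpt n) γ
  -- Summability of penalties for iterates n ≥ 1
  have hPsum : ∀ n, Summable fun γ => w γ * |b.repr (f (n + 1)) γ| ^ p := by
    intro n
    apply Summable.of_nonneg_of_le (fun γ => by
        have := Real.rpow_nonneg (abs_nonneg (b.repr (f (n+1)) γ)) p
        nlinarith [(hw γ)]) _ (parseval b (hpt n)).summable
    intro γ
    have hmin := scalarS_min (w γ) p (hw γ) hp (b.repr (hpt n) γ) 0
    rw [hrepr n γ]
    have h0 : |(0:ℝ)| ^ p = 0 := by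
      rw [abs_zero, Real.zero_rpow (by linarith : p ≠ 0)]
    rw [h0] at hmin
    nlinarith [sq_nonneg (scalarS (w γ) p (b.repr (hpt n) γ) - b.repr (hpt n) γ)]
  -- the real-valued functional
  set P : ℕ → ℝ := fun n => ∑' γ, w γ * |b.repr (f n) γ| ^ p with hP
  set φ : ℕ → ℝ := fun n => ‖K (f n) - g‖ ^ 2 + P n with hφ
  have hε : (0:ℝ) < 1 - ‖K‖ ^ 2 := by nlinarith [norm_nonneg K]
  set ε : ℝ := 1 - ‖K‖ ^ 2 with hεdef
  -- key decrease estimate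
  have key : ∀ n, (Summable fun γ => w γ * |b.repr (f n) γ| ^ p) →
      φ (n + 1) + ε * ‖f (n + 1) - f n‖ ^ 2 ≤ φ n := by
    intro n hsumn
    have hS2 : HasSum (fun γ => (b.repr (f (n+1)) γ - b.repr (hpt n) γ) ^ 2)
        (‖f (n + 1) - hpt n‖ ^ 2) := by
      have := parseval b (f (n + 1) - hpt n)
      simpa [map_sub] using this
    have hT2 : HasSum (fun γ => (b.repr (f n) γ - b.repr (hpt n) γ) ^ 2)
        (‖f n - hpt n‖ ^ 2) := by
      have := parseval b (f n - hpt n)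
      simpa [map_sub] using this
    have coord : ∀ γ,
        (b.repr (f (n+1)) γ - b.repr (hpt n) γ) ^ 2 + w γ * |b.repr (f (n+1)) γ| ^ p ≤
        (b.repr (f n) γ - b.repr (hpt n) γ) ^ 2 + w γ * |b.repr (f n) γ| ^ p := by
      intro γ
      rw [hrepr n γ]
      exact scalarS_min (w γ) p (hw γ) hp (b.repr (hpt n) γ) (b.repr (f n) γ)
    have hLs : Summable fun γ =>
        (b.repr (f (n+1)) γ - b.repr (hpt n) γ) ^ 2 + w γ * |b.repr (f (n+1)) γ| ^ p :=
      hS2.summable.add (hPsum n)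
    have hRs : Summable fun γ =>
        (b.repr (f n) γ - b.repr (hpt n) γ) ^ 2 + w γ * |b.repr (f n) γ| ^ p :=
      hT2.summable.add hsumn
    have hsum_le := Summable.tsum_le_tsum coord hLs hRs
    rw [Summable.tsum_add hS2.summable (hPsum n), Summable.tsum_add hT2.summable hsumn,
      hS2.tsum_eq, hT2.tsum_eq] at hsum_le
    have hid := key_identity K g (f n) (f (n + 1))
    have hop : ‖K (f (n+1) - f n)‖ ^ 2 ≤ ‖K‖ ^ 2 * ‖f (n+1) - f n‖ ^ 2 := by
      have h1 := K.le_opNorm (f (n+1) - f n)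
      nlinarith [norm_nonneg (K (f (n+1) - f n)), norm_nonneg (f (n+1) - f n),
        norm_nonneg K]
    have hPdef1 : P (n+1) = ∑' γ, w γ * |b.repr (f (n+1)) γ| ^ p := rfl
    have hPdef2 : P n = ∑' γ, w γ * |b.repr (f n) γ| ^ p := rfl
    simp only [hφ]
    rw [← hPdef1, ← hPdef2] at hsum_le
    have hhh : hpt n = f n + (ContinuousLinearMap.adjoint K) (g - K (f n)) := rfl
    rw [← hhh] at hid
    nlinarith [hsum_le, hid, hop]
  have hφnonneg : ∀ n, 0 ≤ φ n := by
    intro n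
    have h1 : 0 ≤ P n := tsum_nonneg fun γ => by
      have := Real.rpow_nonneg (abs_nonneg (b.repr (f n) γ)) p
      nlinarith [(hw γ)]
    have h2 : 0 ≤ ‖K (f n) - g‖ ^ 2 := sq_nonneg _
    simp only [hφ]; linarith
  -- partial-sum bound
  have hbound : ∀ N, ∑ i ∈ Finset.range N, ε * ‖f (i + 2) - f (i + 1)‖ ^ 2 + φ (N + 1) ≤ φ 1 := by
    intro N
    induction N with
    | zero => simp
    | succ N ih =>
      rw [Finset.sum_range_succ]
      have hk := key (N + 1) (hPsum N)
      calc ∑ i ∈ Finset.range N, ε * ‖f (i + 2) - f (i + 1)‖ ^ 2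
            + ε * ‖f (N + 1 + 1) - f (N + 1)‖ ^ 2 + φ (N + 1 + 1)
          ≤ ∑ i ∈ Finset.range N, ε * ‖f (i + 2) - f (i + 1)‖ ^ 2 + φ (N + 1) := by
            linarith
        _ ≤ φ 1 := ih
  have hsummable : Summable fun i => ε * ‖f (i + 2) - f (i + 1)‖ ^ 2 := by
    apply summable_of_sum_range_le (c := φ 1)
    · intro i; positivity
    · intro N
      have := hbound N
      have := hφnonneg (N + 1)
      linarith
  have hsum1 : Summable fun i => ‖f (i + 2) - f (i + 1)‖ ^ 2 := by
    have h2 := hsummable.mul_left ε⁻¹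
    refine h2.congr fun i => ?_
    rw [inv_mul_cancel_left₀ (ne_of_gt hε)]
  have hsum : Summable fun n => ‖f (n + 1) - f n‖ ^ 2 := by
    rw [← summable_nat_add_iff 1]
    exact hsum1
  refine ⟨hsum, ?_⟩
  have h0 := hsum.tendsto_atTop_zero
  have h2 : Tendsto (fun n => Real.sqrt (‖f (n + 1) - f n‖ ^ 2)) atTop (nhds (Real.sqrt 0)) :=
    (Real.continuous_sqrt.continuousAt.tendsto).comp h0
  simpa [Real.sqrt_sq (norm_nonneg _)] using h2
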